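/- Let X_n = Σ_{i=0}^∞ a_i ε_{n−i} be a linear process with Σ_{i=0}^∞ |a_i|^γ < ∞ for some γ ∈ (0,1], suppose E|e^{iλε₁} − φ_ε(λ)|² ≤ c₀(|λ|^{2γ} ∧ 1) for all λ ∈ ℝ and some constant c₀ > 0, and suppose that for some β ≥ γ the function u ↦ u^β φ_ε(u) belongs to L¹(ℝ) ∩ L^∞(ℝ). Then there exists a constant c > 0 depending only on a₀ and γ such that for all n ∈ ℕ and all u, v ∈ ℝ: Σ_{1 ≤ i, j ≤ n} |H_{ij}(u,v)| ≤ c n. -/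

import Mathlib

open MeasureTheory ProbabilityTheory Complex

/-- The characteristic function of a real random variable `Y` on `(Ω, μ)`:
`t ↦ E[exp(I t Y)]`. -/
noncomputable def charFn {Ω : Type*} [MeasurableSpace Ω] (μ : Measure Ω) (Y : Ω → ℝ) (t : ℝ) : ℂ :=
  ∫ ω, Complex.exp (Complex.I * (t * Y ω : ℝ)) ∂μ

/-- `H_{ij}(u,v) = E[e^{iuX_i + ivX_j}] − φ(u)φ(v)` where `φ` is the characteristic function
of `X_1`. -/
noncomputable def Hfun {Ω : Type*} [MeasurableSpace Ω] (μ : Measure Ω) (X : ℤ → Ω → ℝ)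
    (i j : ℕ) (u v : ℝ) : ℂ :=
  (∫ ω, Complex.exp (Complex.I * (u * X i ω + v * X j ω : ℝ)) ∂μ)
    - charFn μ (X 1) u * charFn μ (X 1) v

/-!
For `i < j = i + m`, independence factorises the joint characteristic function of
`(X_i, X_j)` over the innovations: with `Φ = φ_ε`,
`E e^{i(uX_i + vX_j)} = ∏_{k<m} Φ(v a_k) · ∏_k Φ(v a_{m+k} + u a_k)`, while
`φ(u)φ(v) = ∏_{k<m} Φ(v a_k) · ∏_k Φ(v a_{m+k}) Φ(u a_k)`. By Cauchy–Schwarz the hypothesis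
on `E|e^{iλε₁} − Φ(λ)|²` gives `|Φ(s+t) − Φ(s)Φ(t)| ≤ c₀ (|s|^γ ∧ 1)(|t|^γ ∧ 1)`, so the two
products differ by at most `c₀ ∑_k |v a_{m+k}|^γ |u a_k|^γ`. The factors `Φ(u a₀)`, `Φ(v a₀)`
absorb `|u|^γ`, `|v|^γ` because `|t|^β Φ(t)` is bounded and `β ≥ γ`. Hence `|H_{i,i+m}|` is at
most a constant times `|a_m|^γ + ∑_k |a_k|^γ |a_{m+k}|^γ`, which is summable in `m`, so every
row of the matrix `(|H_{ij}|)` has a uniformly bounded sum.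
-/

section Probability

open Filter Topology

variable {Ω : Type*} [MeasurableSpace Ω] {μ : Measure Ω}

lemma integrable_exp_I_mul_ofReal [IsFiniteMeasure μ] {Y : Ω → ℝ} (hY : AEMeasurable Y μ) :
    Integrable (fun ω => exp (I * (Y ω : ℂ))) μ :=
  (integrable_const (1 : ℝ)).mono' (by fun_prop)
    (.of_forall fun ω => (norm_exp_I_mul_ofReal _).le)

lemma norm_charFn_le_one [IsProbabilityMeasure μ] (Y : Ω → ℝ) (t : ℝ) : ‖charFn μ Y t‖ ≤ 1 :=
  (norm_integral_le_integral_norm _).trans (by simp_rw [norm_exp_I_mul_ofReal]; simp)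

lemma charFn_eq_charFun_map {Y : Ω → ℝ} (hY : AEMeasurable Y μ) (t : ℝ) :
    charFn μ Y t = charFun (μ.map Y) t := by
  rw [charFun_apply_real, integral_map hY (by fun_prop), charFn]
  congr! 2
  push_cast
  ring_nf

lemma ProbabilityTheory.IdentDistrib.charFn_eq {Ω' : Type*} [MeasurableSpace Ω'] {ν : Measure Ω'}
    {Y : Ω → ℝ} {Z : Ω' → ℝ} (h : IdentDistrib Y Z μ ν) (t : ℝ) :
    charFn μ Y t = charFn ν Z t := by
  rw [charFn_eq_charFun_map h.aemeasurable_fst, charFn_eq_charFun_map h.aemeasurable_snd,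
    h.map_eq]

lemma integral_exp_sum_eq_prod_charFn [IsProbabilityMeasure μ] {ι : Type*} {ξ : ι → Ω → ℝ}
    (hξ : ∀ k, Measurable (ξ k)) (hindep : iIndepFun ξ μ) (s : Finset ι) (c : ι → ℝ) :
    ∫ ω, exp (I * ((∑ k ∈ s, c k * ξ k ω : ℝ) : ℂ)) ∂μ = ∏ k ∈ s, charFn μ (ξ k) (c k) := by
  have hindep' : iIndepFun (fun k ω => c k * ξ k ω) μ :=
    hindep.comp (fun k x => c k * x) fun k => measurable_const.mul measurable_id
  have hprod := congrFun ((hindep'.restrict s).charFun_map_fun_finsetSum_eq_prod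
    fun k _ => ((hξ k).const_mul (c k)).aemeasurable) 1
  rw [Finset.prod_apply, ← charFn_eq_charFun_map (by fun_prop)] at hprod
  simp only [← charFn_eq_charFun_map ((hξ _).const_mul _).aemeasurable] at hprod
  simpa [charFn] using hprod

lemma tendsto_integral_exp_of_ae_tendsto [IsFiniteMeasure μ] {Y : Ω → ℝ} {S : ℕ → Ω → ℝ}
    (hS : ∀ P, AEMeasurable (S P) μ)
    (hlim : ∀ᵐ ω ∂μ, Tendsto (fun P => S P ω) atTop (𝓝 (Y ω))) :
    Tendsto (fun P => ∫ ω, exp (I * (S P ω : ℂ)) ∂μ) atTop (𝓝 (∫ ω, exp (I * (Y ω : ℂ)) ∂μ)) := by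
  refine tendsto_integral_of_dominated_convergence (fun _ => 1)
    (fun P => (integrable_exp_I_mul_ofReal (hS P)).aestronglyMeasurable) (integrable_const 1)
    (fun P => .of_forall fun ω => (norm_exp_I_mul_ofReal _).le) ?_
  filter_upwards [hlim] with ω hω
  exact ((by fun_prop : Continuous fun x : ℝ => exp (I * x)).tendsto (Y ω)).comp hω

end Probability

section Covariance

variable {Ω : Type*} [MeasurableSpace Ω] {μ : Measure Ω}

lemma norm_integral_mul_le_sqrt_mul_sqrt {f g : Ω → ℂ} (hf : MemLp f 2 μ) (hg : MemLp g 2 μ) :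
    ‖∫ ω, f ω * g ω ∂μ‖ ≤ √(∫ ω, ‖f ω‖ ^ 2 ∂μ) * √(∫ ω, ‖g ω‖ ^ 2 ∂μ) := by
  have holder := integral_mul_norm_le_Lp_mul_Lq Real.HolderConjugate.two_two
    (by simpa using hf) (by simpa using hg)
  simp only [Real.rpow_two, ← Real.sqrt_eq_rpow] at holder
  exact (norm_integral_le_integral_norm _).trans (by simpa only [norm_mul] using holder)

variable [IsProbabilityMeasure μ]

lemma integral_sub_integral_mul_sub_integral {f g : Ω → ℂ} (hf : Integrable f μ)
    (hg : Integrable g μ) (hfg : Integrable (fun ω => f ω * g ω) μ) :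
    ∫ ω, (f ω - ∫ ω, f ω ∂μ) * (g ω - ∫ ω, g ω ∂μ) ∂μ
      = ∫ ω, f ω * g ω ∂μ - (∫ ω, f ω ∂μ) * ∫ ω, g ω ∂μ := by
  set a := ∫ ω, f ω ∂μ
  set b := ∫ ω, g ω ∂μ
  have expand : ∀ ω, (f ω - a) * (g ω - b) = (f ω * g ω - a * g ω) - (f ω * b - a * b) :=
    fun ω => by ring
  have h₁ : Integrable (fun ω => f ω * g ω - a * g ω) μ := hfg.sub (hg.const_mul a)
  have h₂ : Integrable (fun ω => f ω * b - a * b) μ := (hf.mul_const b).sub (integrable_const _)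
  simp only [expand]
  rw [integral_sub h₁ h₂,
    integral_sub hfg (hg.const_mul a), integral_sub (hf.mul_const b) (integrable_const _),
    integral_const_mul, integral_mul_const, integral_const]
  simp only [probReal_univ, one_smul]
  ring

lemma norm_charFn_add_sub_mul_le {Y : Ω → ℝ} (hY : Measurable Y) (s t : ℝ) :
    ‖charFn μ Y (s + t) - charFn μ Y s * charFn μ Y t‖
      ≤ √(∫ ω, ‖exp (I * (s * Y ω : ℝ)) - charFn μ Y s‖ ^ 2 ∂μ)
        * √(∫ ω, ‖exp (I * (t * Y ω : ℝ)) - charFn μ Y t‖ ^ 2 ∂μ) := by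
  have hint : ∀ r : ℝ, Integrable (fun ω => exp (I * (r * Y ω : ℝ))) μ :=
    fun r => integrable_exp_I_mul_ofReal (hY.const_mul r).aemeasurable
  have hmemLp : ∀ r : ℝ, MemLp (fun ω => exp (I * (r * Y ω : ℝ)) - charFn μ Y r) 2 μ :=
    fun r => .of_bound ((hint r).sub (integrable_const _)).aestronglyMeasurable 2
      (.of_forall fun ω => (norm_sub_le _ _).trans (by
        rw [norm_exp_I_mul_ofReal]; linarith [norm_charFn_le_one (μ := μ) Y r]))
  have hmul : ∀ ω, exp (I * (s * Y ω : ℝ)) * exp (I * (t * Y ω : ℝ))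
      = exp (I * ((s + t) * Y ω : ℝ)) := fun ω => by
    rw [← Complex.exp_add]; push_cast; ring_nf
  have hcov := integral_sub_integral_mul_sub_integral (hint s) (hint t)
    (by simpa only [hmul] using hint (s + t))
  simp only [hmul] at hcov
  rw [charFn, charFn, charFn, ← hcov]
  exact norm_integral_mul_le_sqrt_mul_sqrt (hmemLp s) (hmemLp t)

lemma min_rpow_two_mul_one_eq_sq {x γ : ℝ} (hx : 0 ≤ x) :
    min (x ^ (2 * γ)) 1 = min (x ^ γ) 1 ^ 2 := by
  rw [mul_comm, Real.rpow_mul hx, Real.rpow_two]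
  rcases le_total (x ^ γ) 1 with h | h
  · rw [min_eq_left h, min_eq_left (pow_le_one₀ (by positivity) h)]
  · rw [min_eq_right h, min_eq_right (one_le_pow₀ h), one_pow]

lemma norm_charFn_add_sub_mul_le_of_variance_le {Y : Ω → ℝ} (hY : Measurable Y) {c₀ γ : ℝ}
    (hc₀ : 0 ≤ c₀)
    (hvar : ∀ lam : ℝ, (∫ ω, ‖exp (I * (lam * Y ω : ℝ)) - charFn μ Y lam‖ ^ 2 ∂μ)
        ≤ c₀ * min (|lam| ^ (2 * γ)) 1)
    (s t : ℝ) :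
    ‖charFn μ Y (s + t) - charFn μ Y s * charFn μ Y t‖
      ≤ c₀ * (min (|s| ^ γ) 1 * min (|t| ^ γ) 1) := by
  have hsqrt : ∀ r : ℝ, √(∫ ω, ‖exp (I * (r * Y ω : ℝ)) - charFn μ Y r‖ ^ 2 ∂μ)
      ≤ √c₀ * min (|r| ^ γ) 1 := fun r => by
    rw [← Real.sqrt_sq (le_min (by positivity) zero_le_one), ← Real.sqrt_mul hc₀,
      ← min_rpow_two_mul_one_eq_sq (abs_nonneg r)]
    exact Real.sqrt_le_sqrt (hvar r)
  calc _ ≤ _ := norm_charFn_add_sub_mul_le hY s t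
    _ ≤ (√c₀ * min (|s| ^ γ) 1) * (√c₀ * min (|t| ^ γ) 1) :=
        mul_le_mul (hsqrt s) (hsqrt t) (Real.sqrt_nonneg _) (by positivity)
    _ = c₀ * (min (|s| ^ γ) 1 * min (|t| ^ γ) 1) := by
        rw [mul_mul_mul_comm, Real.mul_self_sqrt hc₀]

end Covariance

section LinearProcess

open Filter Topology Finset

lemma sum_range_add_coeff_joint {Ω : Type*} {a : ℕ → ℝ} {ε : ℤ → Ω → ℝ} (n : ℤ) (m P : ℕ)
    (u v : ℝ) (ω : Ω) :
    ∑ k ∈ range (m + P), (v * a k + if m ≤ k then u * a (k - m) else 0) * ε (n + m - k) ω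
      = u * ∑ k ∈ range P, a k * ε (n - k) ω + v * ∑ k ∈ range (m + P), a k * ε (n + m - k) ω := by
  have hshift : ∑ k ∈ range (m + P), (if m ≤ k then u * a (k - m) else 0) * ε (n + m - k) ω
      = u * ∑ k ∈ range P, a k * ε (n - k) ω := by
    rw [sum_range_add, sum_eq_zero fun k hk => by rw [if_neg (by simpa using hk), zero_mul],
      zero_add, mul_sum]
    refine sum_congr rfl fun k _ => ?_
    rw [if_pos (Nat.le_add_right m k), Nat.add_sub_cancel_left]
    push_cast
    ring_nf
  simp only [add_mul, sum_add_distrib]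
  rw [hshift, mul_sum _ _ v]
  simp only [mul_assoc]
  ring

variable {Ω : Type*} [MeasurableSpace Ω] {μ : Measure Ω} [IsProbabilityMeasure μ]
  {ε : ℤ → Ω → ℝ}

lemma tendsto_prod_charFn_of_ae_tendsto (hmeas : ∀ i, Measurable (ε i))
    (hindep : iIndepFun ε μ) (hident : ∀ i, IdentDistrib (ε i) (ε 1) μ μ)
    (n : ℤ) {c : ℕ → ℝ} {Y : Ω → ℝ}
    (hY : ∀ᵐ ω ∂μ, Tendsto (fun P => ∑ k ∈ range P, c k * ε (n - k) ω) atTop (𝓝 (Y ω))) :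
    Tendsto (fun P => ∏ k ∈ range P, charFn μ (ε 1) (c k)) atTop
      (𝓝 (∫ ω, exp (I * (Y ω : ℂ)) ∂μ)) := by
  have hindep' : iIndepFun (fun k : ℕ => ε (n - k)) μ :=
    hindep.precomp fun k l h => by simpa using h
  have hlim := tendsto_integral_exp_of_ae_tendsto
    (fun P => (Finset.measurable_sum _ fun k _ => (hmeas _).const_mul (c k)).aemeasurable) hY
  simpa only [integral_exp_sum_eq_prod_charFn (fun k => hmeas _) hindep',
    fun k : ℕ => (hident (n - k)).charFn_eq] using hlim

variable {a : ℕ → ℝ} {X : ℤ → Ω → ℝ}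

lemma tendsto_prod_charFn_linearProcess (hmeas : ∀ i, Measurable (ε i))
    (hindep : iIndepFun ε μ) (hident : ∀ i, IdentDistrib (ε i) (ε 1) μ μ)
    (hX : ∀ n : ℤ, ∀ᵐ ω ∂μ, HasSum (fun i : ℕ => a i * ε (n - i) ω) (X n ω)) (n : ℤ) (w : ℝ) :
    Tendsto (fun P => ∏ k ∈ range P, charFn μ (ε 1) (w * a k)) atTop
      (𝓝 (charFn μ (X n) w)) := by
  refine tendsto_prod_charFn_of_ae_tendsto hmeas hindep hident n ?_
  filter_upwards [hX n] with ω hω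
  simpa only [mul_sum, mul_assoc] using hω.tendsto_sum_nat.const_mul w

lemma tendsto_integral_exp_joint_linearProcess (hmeas : ∀ i, Measurable (ε i))
    (hindep : iIndepFun ε μ) (hident : ∀ i, IdentDistrib (ε i) (ε 1) μ μ)
    (hX : ∀ n : ℤ, ∀ᵐ ω ∂μ, HasSum (fun i : ℕ => a i * ε (n - i) ω) (X n ω))
    (n : ℤ) (m : ℕ) (u v : ℝ) :
    Tendsto (fun P => (∏ k ∈ range m, charFn μ (ε 1) (v * a k))
        * ∏ k ∈ range P, charFn μ (ε 1) (v * a (m + k) + u * a k)) atTop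
      (𝓝 (∫ ω, exp (I * ((u * X n ω + v * X (n + m) ω : ℝ) : ℂ)) ∂μ)) := by
  set c : ℕ → ℝ := fun k => v * a k + if m ≤ k then u * a (k - m) else 0
  have hlim := tendsto_prod_charFn_of_ae_tendsto hmeas hindep hident (n + m) (c := c)
    (Y := fun ω => u * X n ω + v * X (n + m) ω) (by
      filter_upwards [hX n, hX (n + m)] with ω h₁ h₂
      have h₂' := (tendsto_add_atTop_iff_nat m).2 h₂.tendsto_sum_nat
      rw [← tendsto_add_atTop_iff_nat m]
      simp only [add_comm _ m, c, sum_range_add_coeff_joint] at h₂' ⊢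
      exact (h₁.tendsto_sum_nat.const_mul u).add (h₂'.const_mul v))
  rw [← tendsto_add_atTop_iff_nat m] at hlim
  refine hlim.congr fun P => ?_
  rw [add_comm, prod_range_add]
  congr 1
  · exact prod_congr rfl fun k hk => by simp [c, not_le.2 (mem_range.1 hk)]
  · simp [c]

end LinearProcess

section Analysis

open Finset

lemma norm_prod_sub_prod_le {ι R : Type*} [NormedCommRing R] [NormOneClass R]
    (s : Finset ι) {A B : ι → R} (hA : ∀ k ∈ s, ‖A k‖ ≤ 1) (hB : ∀ k ∈ s, ‖B k‖ ≤ 1) :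
    ‖∏ k ∈ s, A k - ∏ k ∈ s, B k‖ ≤ ∑ k ∈ s, ‖A k - B k‖ := by
  classical
  induction s using Finset.induction_on with
  | empty => simp
  | insert k s hk ih =>
    simp only [mem_insert, forall_eq_or_imp] at hA hB
    have hBs : ‖∏ l ∈ s, B l‖ ≤ 1 :=
      (Finset.norm_prod_le _ _).trans (prod_le_one (fun _ _ => norm_nonneg _) hB.2)
    rw [prod_insert hk, prod_insert hk, sum_insert hk,
      show A k * ∏ l ∈ s, A l - B k * ∏ l ∈ s, B l
        = A k * (∏ l ∈ s, A l - ∏ l ∈ s, B l) + (A k - B k) * ∏ l ∈ s, B l by ring]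
    calc _ ≤ ‖A k‖ * ‖∏ l ∈ s, A l - ∏ l ∈ s, B l‖ + ‖A k - B k‖ * ‖∏ l ∈ s, B l‖ :=
          (norm_add_le _ _).trans (add_le_add (norm_mul_le _ _) (norm_mul_le _ _))
      _ ≤ 1 * ∑ l ∈ s, ‖A l - B l‖ + ‖A k - B k‖ * 1 := by
          gcongr
          exacts [hA.1, ih hA.2 hB.2]
      _ = _ := by ring

noncomputable def lagSum (x : ℕ → ℝ) (m : ℕ) : ℝ := ∑' k, x k * x (m + k)

variable {x : ℕ → ℝ}

lemma summable_mul_shift (hx0 : 0 ≤ x) (hx : Summable x) (m : ℕ) :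
    Summable fun k => x k * x (m + k) :=
  (hx.mul_right (∑' k, x k)).of_nonneg_of_le (fun k => mul_nonneg (hx0 k) (hx0 _))
    fun k => mul_le_mul_of_nonneg_left (hx.le_tsum _ fun l _ => hx0 l) (hx0 k)

lemma lagSum_nonneg (hx0 : 0 ≤ x) (m : ℕ) : 0 ≤ lagSum x m :=
  tsum_nonneg fun k => mul_nonneg (hx0 k) (hx0 _)

lemma sum_range_mul_shift_succ_le_lagSum (hx0 : 0 ≤ x) (hx : Summable x) (m P : ℕ) :
    ∑ k ∈ range P, x (k + 1) * x (m + (k + 1)) ≤ lagSum x m :=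
  calc _ ≤ ∑ k ∈ range (P + 1), x k * x (m + k) := by
        rw [sum_range_succ']
        exact le_add_of_nonneg_right (mul_nonneg (hx0 0) (hx0 _))
    _ ≤ lagSum x m :=
        (summable_mul_shift hx0 hx m).sum_le_tsum _ fun k _ => mul_nonneg (hx0 k) (hx0 _)

lemma sum_lagSum_le (hx0 : 0 ≤ x) (hx : Summable x) (s : Finset ℕ) :
    ∑ m ∈ s, lagSum x m ≤ (∑' k, x k) ^ 2 := by
  have hwindow : ∀ k, ∑ m ∈ s, x (m + k) ≤ ∑' l, x l := fun k => by
    simpa only [sum_map, addRightEmbedding_apply] using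
      hx.sum_le_tsum (s.map (addRightEmbedding k)) fun l _ => hx0 l
  calc ∑ m ∈ s, lagSum x m = ∑' k, x k * ∑ m ∈ s, x (m + k) := by
        simp only [lagSum, mul_sum]
        exact (Summable.tsum_finsetSum fun m _ => summable_mul_shift hx0 hx m).symm
    _ ≤ ∑' k, x k * ∑' l, x l :=
        have hle k := mul_le_mul_of_nonneg_left (hwindow k) (hx0 k)
        ((hx.mul_right _).of_nonneg_of_le (fun k => mul_nonneg (hx0 k) (sum_nonneg
          fun m _ => hx0 _)) hle).tsum_le_tsum hle (hx.mul_right _)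
    _ = (∑' k, x k) ^ 2 := by rw [tsum_mul_right, sq]

end Analysis

section PairBound

open Finset

lemma rpow_le_one_add_rpow {x γ β : ℝ} (hx : 0 ≤ x) (hγ : 0 ≤ γ) (hγβ : γ ≤ β) :
    x ^ γ ≤ 1 + x ^ β := by
  rcases le_total x 1 with h | h
  · linarith [Real.rpow_le_one hx h hγ, Real.rpow_nonneg hx β]
  · linarith [Real.rpow_le_rpow_of_exponent_le h hγβ]

lemma abs_rpow_mul_norm_le {Φ : ℝ → ℂ} {γ β C : ℝ} (hΦ : ∀ s, ‖Φ s‖ ≤ 1)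
    (hC : ∀ s, |s| ^ β * ‖Φ s‖ ≤ C) (hγ : 0 ≤ γ) (hγβ : γ ≤ β) {b : ℝ} (hb : b ≠ 0) (t : ℝ) :
    |t| ^ γ * ‖Φ (t * b)‖ ≤ |b| ^ (-γ) * (1 + C) := by
  have hscale : |t| ^ γ = |b| ^ (-γ) * |t * b| ^ γ := by
    rw [abs_mul, Real.mul_rpow (abs_nonneg t) (abs_nonneg b), ← mul_assoc, mul_comm (_ ^ (-γ)),
      mul_assoc, ← Real.rpow_add (abs_pos.2 hb), neg_add_cancel, Real.rpow_zero, mul_one]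
  rw [hscale, mul_assoc]
  gcongr
  calc |t * b| ^ γ * ‖Φ (t * b)‖ ≤ (1 + |t * b| ^ β) * ‖Φ (t * b)‖ := by
        gcongr
        exact rpow_le_one_add_rpow (abs_nonneg _) hγ hγβ
    _ ≤ 1 + C := by linarith [hΦ (t * b), hC (t * b)]

lemma min_abs_mul_rpow_le {γ : ℝ} (s t : ℝ) : min (|s * t| ^ γ) 1 ≤ |s| ^ γ * |t| ^ γ :=
  (min_le_left _ _).trans_eq (by rw [abs_mul, Real.mul_rpow (abs_nonneg s) (abs_nonneg t)])

variable {Φ : ℝ → ℂ} {a : ℕ → ℝ} {γ c₀ K : ℝ}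

lemma norm_prod_mul_sub_prod_le (hΦ : ∀ s, ‖Φ s‖ ≤ 1)
    (hcov : ∀ s t, ‖Φ (s + t) - Φ s * Φ t‖ ≤ c₀ * (min (|s| ^ γ) 1 * min (|t| ^ γ) 1))
    (hK : ∀ t, |t| ^ γ * ‖Φ (t * a 0)‖ ≤ K) (hc₀ : 0 ≤ c₀) (hK0 : 0 ≤ K)
    (hsum : Summable fun k => |a k| ^ γ) {m : ℕ} (hm : 0 < m) (u v : ℝ) (P : ℕ) :
    ‖(∏ k ∈ range m, Φ (v * a k)) * (∏ k ∈ range P, Φ (v * a (m + k) + u * a k)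
        - ∏ k ∈ range P, Φ (v * a (m + k)) * Φ (u * a k))‖
      ≤ c₀ * K * |a m| ^ γ + c₀ * K ^ 2 * lagSum (fun k => |a k| ^ γ) m := by
  have hx0 : 0 ≤ fun k => |a k| ^ γ := fun k => by positivity
  have hL := lagSum_nonneg hx0 m
  set A : ℕ → ℂ := fun k => Φ (v * a (m + k) + u * a k)
  set B : ℕ → ℂ := fun k => Φ (v * a (m + k)) * Φ (u * a k)
  have hB : ∀ k, ‖B k‖ ≤ 1 := fun k => by
    simpa only [B, norm_mul] using mul_le_one₀ (hΦ _) (norm_nonneg _) (hΦ _)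
  have hprod_le_one : ∀ (f : ℕ → ℂ), (∀ k, ‖f k‖ ≤ 1) → ∀ n, ‖∏ k ∈ range n, f k‖ ≤ 1 :=
    fun f hf n => (Finset.norm_prod_le _ _).trans
      (prod_le_one (fun _ _ => norm_nonneg _) fun k _ => hf k)
  have hQ : ‖∏ k ∈ range m, Φ (v * a k)‖ ≤ ‖Φ (v * a 0)‖ := by
    obtain ⟨n, rfl⟩ : ∃ n, m = n + 1 := ⟨m - 1, by omega⟩
    rw [prod_range_succ', norm_mul]
    exact mul_le_of_le_one_left (norm_nonneg _) (hprod_le_one _ (fun k => hΦ _) n)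
  have hAB : ∀ k, ‖A k - B k‖ ≤ c₀ * (|u| ^ γ * |v| ^ γ) * (|a k| ^ γ * |a (m + k)| ^ γ) :=
    fun k => calc
      _ ≤ c₀ * (min (|v * a (m + k)| ^ γ) 1 * min (|u * a k| ^ γ) 1) := hcov _ _
      _ ≤ c₀ * ((|v| ^ γ * |a (m + k)| ^ γ) * (|u| ^ γ * |a k| ^ γ)) := by
          gcongr <;> exact min_abs_mul_rpow_le _ _
      _ = _ := by ring
  have hA0 : ‖A 0 - B 0‖ ≤ c₀ * (|v| ^ γ * |a m| ^ γ) := calc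
      _ ≤ c₀ * (min (|v * a (m + 0)| ^ γ) 1 * min (|u * a 0| ^ γ) 1) := hcov _ _
      _ ≤ c₀ * ((|v| ^ γ * |a m| ^ γ) * 1) := by
          gcongr
          exacts [min_abs_mul_rpow_le _ _, min_le_right _ _]
      _ = _ := by rw [mul_one]
  rcases P with _ | P
  · simp only [range_zero, prod_empty, sub_self, mul_zero, norm_zero]
    positivity
  have htail : ‖∏ k ∈ range P, A (k + 1) - ∏ k ∈ range P, B (k + 1)‖
      ≤ c₀ * (|u| ^ γ * |v| ^ γ) * lagSum (fun k => |a k| ^ γ) m :=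
    calc _ ≤ ∑ k ∈ range P, ‖A (k + 1) - B (k + 1)‖ :=
          norm_prod_sub_prod_le _ (fun k _ => hΦ _) fun k _ => hB _
      _ ≤ ∑ k ∈ range P,
            c₀ * (|u| ^ γ * |v| ^ γ) * (|a (k + 1)| ^ γ * |a (m + (k + 1))| ^ γ) :=
          sum_le_sum fun k _ => hAB (k + 1)
      _ ≤ _ := by
          rw [← mul_sum]
          exact mul_le_mul_of_nonneg_left
            (sum_range_mul_shift_succ_le_lagSum hx0 hsum m P) (by positivity)
  -- The factor `k = 0` is split off: only `Φ (u a₀)` and `Φ (v a₀)` can absorb `|u|^γ`, `|v|^γ`.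
  have hdiff : ‖∏ k ∈ range (P + 1), A k - ∏ k ∈ range (P + 1), B k‖
      ≤ ‖A 0 - B 0‖ + ‖∏ k ∈ range P, A (k + 1) - ∏ k ∈ range P, B (k + 1)‖ * ‖Φ (u * a 0)‖ := by
    rw [prod_range_succ', prod_range_succ',
      show (∏ k ∈ range P, A (k + 1)) * A 0 - (∏ k ∈ range P, B (k + 1)) * B 0
        = (∏ k ∈ range P, A (k + 1)) * (A 0 - B 0)
          + (∏ k ∈ range P, A (k + 1) - ∏ k ∈ range P, B (k + 1)) * B 0 by ring]
    refine (norm_add_le _ _).trans (add_le_add ?_ ?_) <;> rw [norm_mul]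
    · exact mul_le_of_le_one_left (norm_nonneg _) (hprod_le_one _ (fun k => hΦ _) P)
    · gcongr
      simpa only [B, norm_mul] using mul_le_of_le_one_left (norm_nonneg _) (hΦ _)
  calc _ ≤ ‖Φ (v * a 0)‖ * (c₀ * (|v| ^ γ * |a m| ^ γ)
          + c₀ * (|u| ^ γ * |v| ^ γ) * lagSum (fun k => |a k| ^ γ) m * ‖Φ (u * a 0)‖) := by
        rw [norm_mul]
        gcongr
        exact hdiff.trans (by gcongr)
    _ = c₀ * |a m| ^ γ * (|v| ^ γ * ‖Φ (v * a 0)‖) + c₀ * lagSum (fun k => |a k| ^ γ) m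
          * ((|u| ^ γ * ‖Φ (u * a 0)‖) * (|v| ^ γ * ‖Φ (v * a 0)‖)) := by ring
    _ ≤ c₀ * |a m| ^ γ * K + c₀ * lagSum (fun k => |a k| ^ γ) m * (K * K) := by
        gcongr
        exacts [hK v, hK u, hK v]
    _ = _ := by ring

end PairBound

section Hfun

open Filter Topology Finset

variable {Ω : Type*} [MeasurableSpace Ω] {μ : Measure Ω} [IsProbabilityMeasure μ]
  {X : ℤ → Ω → ℝ}

lemma norm_Hfun_le_two (i j : ℕ) (u v : ℝ) : ‖Hfun μ X i j u v‖ ≤ 2 := by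
  have hjoint : ‖∫ ω, exp (I * ((u * X i ω + v * X j ω : ℝ) : ℂ)) ∂μ‖ ≤ 1 :=
    (norm_integral_le_integral_norm _).trans (by simp_rw [norm_exp_I_mul_ofReal]; simp)
  have hprod : ‖charFn μ (X 1) u * charFn μ (X 1) v‖ ≤ 1 := by
    rw [norm_mul]
    exact mul_le_one₀ (norm_charFn_le_one _ _) (norm_nonneg _) (norm_charFn_le_one _ _)
  rw [Hfun]
  exact (norm_sub_le _ _).trans (by linarith)

omit [IsProbabilityMeasure μ] in
lemma Hfun_comm (i j : ℕ) (u v : ℝ) : Hfun μ X i j u v = Hfun μ X j i v u := by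
  simp only [Hfun, add_comm (u * X i _), mul_comm (charFn μ (X 1) u)]

variable {ε : ℤ → Ω → ℝ} {a : ℕ → ℝ}

lemma tendsto_prod_sub_prod_Hfun (hmeas : ∀ i, Measurable (ε i))
    (hindep : iIndepFun ε μ) (hident : ∀ i, IdentDistrib (ε i) (ε 1) μ μ)
    (hX : ∀ n : ℤ, ∀ᵐ ω ∂μ, HasSum (fun i : ℕ => a i * ε (n - i) ω) (X n ω))
    (i m : ℕ) (u v : ℝ) :
    Tendsto (fun P => (∏ k ∈ range m, charFn μ (ε 1) (v * a k))
        * (∏ k ∈ range P, charFn μ (ε 1) (v * a (m + k) + u * a k)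
          - ∏ k ∈ range P, charFn μ (ε 1) (v * a (m + k)) * charFn μ (ε 1) (u * a k))) atTop
      (𝓝 (Hfun μ X i (i + m) u v)) := by
  have hjoint := tendsto_integral_exp_joint_linearProcess hmeas hindep hident hX i m u v
  have hv := (tendsto_add_atTop_iff_nat m).2
    (tendsto_prod_charFn_linearProcess hmeas hindep hident hX 1 v)
  have hlim := hjoint.sub
    ((tendsto_prod_charFn_linearProcess hmeas hindep hident hX 1 u).mul hv)
  rw [Hfun, Nat.cast_add]
  refine hlim.congr fun P => ?_
  rw [add_comm P m, prod_range_add, prod_mul_distrib]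
  ring

end Hfun

section MainBound

open Filter Finset

variable {Ω : Type*} [MeasurableSpace Ω] {μ : Measure Ω} [IsProbabilityMeasure μ]
  {X : ℤ → Ω → ℝ} {ε : ℤ → Ω → ℝ} {a : ℕ → ℝ} {γ c₀ K : ℝ}

lemma norm_Hfun_le (hmeas : ∀ i, Measurable (ε i))
    (hindep : iIndepFun ε μ) (hident : ∀ i, IdentDistrib (ε i) (ε 1) μ μ)
    (hX : ∀ n : ℤ, ∀ᵐ ω ∂μ, HasSum (fun i : ℕ => a i * ε (n - i) ω) (X n ω))
    (hsum : Summable fun k => |a k| ^ γ) (hc₀ : 0 ≤ c₀)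
    (hcha : ∀ lam : ℝ,
      (∫ ω, ‖exp (I * (lam * ε 1 ω : ℝ)) - charFn μ (ε 1) lam‖ ^ 2 ∂μ)
        ≤ c₀ * min (|lam| ^ (2 * γ)) 1)
    (hK : ∀ t, |t| ^ γ * ‖charFn μ (ε 1) (t * a 0)‖ ≤ K) (hK0 : 0 ≤ K)
    {i j : ℕ} (hij : i < j) (u v : ℝ) :
    ‖Hfun μ X i j u v‖
      ≤ c₀ * K * |a (j - i)| ^ γ + c₀ * K ^ 2 * lagSum (fun k => |a k| ^ γ) (j - i) := by
  obtain ⟨m, rfl⟩ := Nat.exists_eq_add_of_lt hij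
  rw [add_assoc, Nat.add_sub_cancel_left]
  exact le_of_tendsto
    (tendsto_prod_sub_prod_Hfun hmeas hindep hident hX i (m + 1) u v).norm
    (.of_forall <| norm_prod_mul_sub_prod_le (norm_charFn_le_one _)
      (norm_charFn_add_sub_mul_le_of_variance_le (hmeas 1) hc₀ hcha) hK hc₀ hK0 hsum
      m.succ_pos u v)

lemma sum_sum_le_mul_card_of_le_lag {f : ℕ → ℕ → ℝ} {b : ℕ → ℝ} {D B : ℝ} (hdiag : ∀ i, f i i ≤ D)
    (hlt : ∀ i j, i < j → f i j ≤ b (j - i) ∧ f j i ≤ b (j - i))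
    (hB : ∀ t : Finset ℕ, ∑ m ∈ t, b m ≤ B) (s : Finset ℕ) :
    ∑ i ∈ s, ∑ j ∈ s, f i j ≤ (D + 2 * B) * #s := by
  have hrow : ∀ i ∈ s, ∑ j ∈ s, f i j ≤ D + 2 * B := fun i hi => by
    set t := s.filter fun j => ¬ j < i
    rw [← sum_filter_add_sum_filter_not s (· < i), ← sum_filter_add_sum_filter_not t (· = i),
      filter_eq', if_pos (mem_filter.2 ⟨hi, lt_irrefl i⟩), sum_singleton]
    have hbelow : ∑ j ∈ s.filter (· < i), f i j ≤ B := calc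
      _ ≤ ∑ j ∈ s.filter (· < i), b (i - j) :=
          sum_le_sum fun j hj => (hlt j i (mem_filter.1 hj).2).2
      _ = ∑ m ∈ (s.filter (· < i)).image (i - ·), b m :=
          (sum_image fun j hj l hl h => by simp only [mem_coe, mem_filter] at hj hl; omega).symm
      _ ≤ B := hB _
    have habove : ∑ j ∈ t.filter (¬ · = i), f i j ≤ B := calc
      _ ≤ ∑ j ∈ t.filter (¬ · = i), b (j - i) := sum_le_sum fun j hj => (hlt i j (by
          simp only [t, mem_filter] at hj; omega)).1
      _ = ∑ m ∈ (t.filter (¬ · = i)).image (· - i), b m :=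
          (sum_image fun j hj l hl h => by
            simp only [t, mem_coe, mem_filter] at hj hl; omega).symm
      _ ≤ B := hB _
    linarith [hdiag i]
  calc _ ≤ ∑ _i ∈ s, (D + 2 * B) := sum_le_sum hrow
    _ = _ := by rw [sum_const, nsmul_eq_mul, mul_comm]

end MainBound

theorem stmt5_general {Ω : Type*} [MeasurableSpace Ω] (μ : Measure Ω) [IsProbabilityMeasure μ]
    (ε : ℤ → Ω → ℝ) (hmeas : ∀ i, Measurable (ε i))
    (hindep : iIndepFun ε μ)
    (hident : ∀ i, IdentDistrib (ε i) (ε 1) μ μ)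
    (a : ℕ → ℝ) (ha0 : a 0 ≠ 0)
    (X : ℤ → Ω → ℝ)
    (hX : ∀ n : ℤ, ∀ᵐ ω ∂μ, HasSum (fun i : ℕ => a i * ε (n - i) ω) (X n ω))
    (γ : ℝ) (hγ : γ ∈ Set.Ioc (0:ℝ) 1)
    (hsum : Summable (fun i => |a i| ^ γ))
    (c₀ : ℝ) (hc₀ : 0 < c₀)
    (hcha : ∀ lam : ℝ,
      (∫ ω, ‖Complex.exp (Complex.I * (lam * ε 1 ω : ℝ)) - charFn μ (ε 1) lam‖ ^ 2 ∂μ)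
        ≤ c₀ * min (|lam| ^ (2 * γ)) 1)
    (β : ℝ) (hβ : γ ≤ β)
    (hLinf : ∃ C : ℝ, ∀ u : ℝ, |u| ^ β * ‖charFn μ (ε 1) u‖ ≤ C) :
    ∃ c > (0:ℝ), ∀ n : ℕ, ∀ u v : ℝ,
      (∑ i ∈ Finset.Icc 1 n, ∑ j ∈ Finset.Icc 1 n, ‖Hfun μ X i j u v‖) ≤ c * n := by
  obtain ⟨C, hC⟩ := hLinf
  have hC0 : 0 ≤ C := by
    simpa only [abs_zero, Real.zero_rpow (hγ.1.trans_le hβ).ne', zero_mul] using hC 0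
  obtain ⟨K, hK0, hK⟩ : ∃ K, 0 ≤ K ∧ ∀ t, |t| ^ γ * ‖charFn μ (ε 1) (t * a 0)‖ ≤ K :=
    ⟨_, by positivity, abs_rpow_mul_norm_le (norm_charFn_le_one (ε 1)) hC hγ.1.le hβ ha0⟩
  set x : ℕ → ℝ := fun k => |a k| ^ γ
  have hx0 : 0 ≤ x := fun k => by positivity
  obtain ⟨B, hB0, hB⟩ : ∃ B, 0 ≤ B ∧
      ∀ t : Finset ℕ, ∑ m ∈ t, (c₀ * K * x m + c₀ * K ^ 2 * lagSum x m) ≤ B :=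
    ⟨c₀ * K * ∑' k, x k + c₀ * K ^ 2 * (∑' k, x k) ^ 2, by positivity, fun t => by
      rw [Finset.sum_add_distrib, ← Finset.mul_sum, ← Finset.mul_sum]
      gcongr
      exacts [hsum.sum_le_tsum t fun k _ => hx0 k, sum_lagSum_le hx0 hsum t]⟩
  have hHfun {i j : ℕ} (hij : i < j) (u v : ℝ) :=
    norm_Hfun_le (X := X) hmeas hindep hident hX hsum hc₀.le hcha hK hK0 hij u v
  refine ⟨2 + 2 * B, by positivity, fun n u v => ?_⟩
  simpa only [Nat.card_Icc, add_tsub_cancel_right] using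
    sum_sum_le_mul_card_of_le_lag (fun i => norm_Hfun_le_two i i u v)
      (fun i j hij => ⟨hHfun hij u v, Hfun_comm (μ := μ) j i u v ▸ hHfun hij v u⟩) hB
      (Finset.Icc 1 n)

/-- for a linear process `X_n = Σ_{i=0}^∞ a_i ε_{n−i}` with `Σ |a_i|^γ < ∞` for
some `γ ∈ (0,1]`, if `E|e^{iλε₁} − φ_ε(λ)|² ≤ c₀(|λ|^{2γ} ∧ 1)` for all `λ` and some `c₀ > 0`,
and moreover `u^β φ_ε(u) ∈ L¹(ℝ) ∩ L^∞(ℝ)` for some `β ≥ γ`, then there is `c > 0`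
(depending only on `a₀` and `γ`) such that `Σ_{1 ≤ i, j ≤ n} |H_{ij}(u,v)| ≤ c n` for all `n`
and all `u, v ∈ ℝ`. -/
theorem stmt5 {Ω : Type*} [MeasurableSpace Ω] (μ : Measure Ω) [IsProbabilityMeasure μ]
    (ε : ℤ → Ω → ℝ) (hmeas : ∀ i, Measurable (ε i))
    (hindep : iIndepFun ε μ)
    (hident : ∀ i, IdentDistrib (ε i) (ε 1) μ μ)
    (a : ℕ → ℝ) (ha0 : a 0 ≠ 0)
    (X : ℤ → Ω → ℝ)
    (hX : ∀ n : ℤ, ∀ᵐ ω ∂μ, HasSum (fun i : ℕ => a i * ε (n - i) ω) (X n ω))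
    (γ : ℝ) (hγ : γ ∈ Set.Ioc (0:ℝ) 1)
    (hsum : Summable (fun i => |a i| ^ γ))
    (c₀ : ℝ) (hc₀ : 0 < c₀)
    (hcha : ∀ lam : ℝ,
      (∫ ω, ‖Complex.exp (Complex.I * (lam * ε 1 ω : ℝ)) - charFn μ (ε 1) lam‖ ^ 2 ∂μ)
        ≤ c₀ * min (|lam| ^ (2 * γ)) 1)
    (β : ℝ) (hβ : γ ≤ β)
    (hL1 : Integrable (fun u : ℝ => |u| ^ β * ‖charFn μ (ε 1) u‖) volume)
    (hLinf : ∃ C : ℝ, ∀ u : ℝ, |u| ^ β * ‖charFn μ (ε 1) u‖ ≤ C) :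
    ∃ c > (0:ℝ), ∀ n : ℕ, ∀ u v : ℝ,
      (∑ i ∈ Finset.Icc 1 n, ∑ j ∈ Finset.Icc 1 n, ‖Hfun μ X i j u v‖) ≤ c * n :=
  stmt5_general μ ε hmeas hindep hident a ha0 X hX γ hγ hsum c₀ hc₀ hcha β hβ hLinf
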